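/- arXiv:1903.08468 — 7 statements merged into one kernel-verified Lean document; each statement's English description precedes it below -/
import Mathlib

section
/- Let N ≥ 1, let A ∈ ℂ^{N×N} be Hermitian positive definite, and let m > 0 be a real number. Then for every Hermitian positive definite matrix C ∈ ℂ^{N×N}, exp(−Re tr(C⁻¹A)) · (Re det C)^{−m} ≤ (m/e)^{N·m} · (Re det A)^{−m}, and equality holds for C = (1/m)·A. Consequently, the supremum over all Hermitian positive definite C of exp(−Re tr(C⁻¹A)) · (Re det C)^{−m} equals (m/e)^{N·m} · (Re det A)^{−m} and is attained at C = (1/m)·A. -/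
open Matrix
open scoped ComplexOrder

lemma trace_eq_sum_eig {n : Type*} [Fintype n] [DecidableEq n]
    {A : Matrix n n ℂ} (hA : A.IsHermitian) :
    A.trace = ∑ i, (hA.eigenvalues i : ℂ) := by
  conv_lhs => rw [hA.spectral_theorem, Unitary.conjStarAlgAut_apply]
  rw [Matrix.trace_mul_comm, ← Matrix.mul_assoc,
    Matrix.mem_unitaryGroup_iff'.mp (hA.eigenvectorUnitary).2, Matrix.one_mul,
    Matrix.trace_diagonal]
  rfl

lemma scalar_bound {l m : ℝ} (hl : 0 < l) (hm : 0 < m) :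
    Real.exp (-l) * l ^ m ≤ (m / Real.exp 1) ^ m := by
  have h := Real.log_le_sub_one_of_pos (div_pos hl hm)
  rw [Real.log_div hl.ne' hm.ne'] at h
  have hx : Real.exp (-l) * l ^ m = Real.exp (-l + Real.log l * m) := by
    rw [Real.rpow_def_of_pos hl, ← Real.exp_add]
  have hy : (m / Real.exp 1) ^ m = Real.exp ((Real.log m - 1) * m) := by
    rw [Real.rpow_def_of_pos (div_pos hm (Real.exp_pos 1)),
      Real.log_div hm.ne' (Real.exp_pos 1).ne', Real.log_exp]
  rw [hx, hy]
  apply Real.exp_le_exp.mpr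
  have h2 := mul_le_mul_of_nonneg_right h hm.le
  have h3 : (l / m - 1) * m = l - m := by field_simp
  nlinarith

open scoped MatrixOrder in
lemma main_bound (N : ℕ) (A : Matrix (Fin N) (Fin N) ℂ) (hA : A.PosDef)
    (m : ℝ) (hm : 0 < m) (C : Matrix (Fin N) (Fin N) ℂ) (hC : C.PosDef) :
    Real.exp (-((C⁻¹ * A).trace.re)) * C.det.re ^ (-m) ≤
      (m / Real.exp 1) ^ ((N : ℝ) * m) * A.det.re ^ (-m) := by
  set S := CFC.sqrt A with hSdef
  have hSH : S.IsHermitian := (CFC.sqrt_nonneg A).posSemidef.1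
  have hSS : S * S = A := CFC.sqrt_mul_sqrt_self A hA.posSemidef.nonneg
  set M := S * C⁻¹ * S with hMdef
  have hMps : M.PosSemidef := by
    have := hC.inv.posSemidef.conjTranspose_mul_mul_same S
    rwa [hSH.eq] at this
  set lam := hMps.1.eigenvalues with hlam
  have hdetCM : M.det * C.det = A.det := by
    have h1 : C⁻¹.det * C.det = 1 :=
      det_nonsing_inv_mul_det C (isUnit_iff_ne_zero.mpr hC.det_pos.ne')
    calc M.det * C.det = (S.det * S.det) * (C⁻¹.det * C.det) := by
          rw [hMdef, det_mul, det_mul]; ring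
      _ = A.det := by rw [h1, mul_one, ← det_mul, hSS]
  have hprodC : M.det = ((∏ i, lam i : ℝ) : ℂ) := by
    rw [hMps.1.det_eq_prod_eigenvalues]; push_cast; rfl
  have hMdetne : M.det ≠ 0 := by
    intro h; rw [h, zero_mul] at hdetCM; exact hA.det_pos.ne' hdetCM.symm
  have hlampos : ∀ i, 0 < lam i := by
    intro i
    rcases (hMps.eigenvalues_nonneg i).lt_or_eq with h | h
    · exact h
    · exact absurd (by rw [hprodC]; simp [Finset.prod_eq_zero (f := lam) (Finset.mem_univ i) h.symm])
        hMdetne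
  have htr : (C⁻¹ * A).trace = M.trace := by
    rw [← hSS, ← Matrix.mul_assoc, Matrix.trace_mul_comm, ← Matrix.mul_assoc]
  have htrM : M.trace = ((∑ i, lam i : ℝ) : ℂ) := by
    rw [trace_eq_sum_eig hMps.1]; push_cast; rfl
  set d := A.det.re with hd_def
  set p := ∏ i, lam i with hp_def
  set s := ∑ i, lam i with hs_def
  have hd : 0 < d := (Complex.lt_def.mp hA.det_pos).1
  have hp : 0 < p := Finset.prod_pos fun i _ => hlampos i
  have hCdre : C.det.re = d / p := by
    rw [hprodC] at hdetCM
    have := congrArg Complex.re hdetCM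
    rw [Complex.re_ofReal_mul] at this
    field_simp
    linarith [this]
  have htre : (C⁻¹ * A).trace.re = s := by rw [htr, htrM, Complex.ofReal_re]
  rw [htre, hCdre]
  have hsplit : (d / p) ^ (-m) = d ^ (-m) * p ^ m := by
    rw [Real.div_rpow hd.le hp.le, Real.rpow_neg hp.le, div_inv_eq_mul]
  rw [hsplit]
  have key : Real.exp (-s) * p ^ m ≤ (m / Real.exp 1) ^ ((N : ℝ) * m) := by
    have hrhs : (m / Real.exp 1) ^ ((N : ℝ) * m) = ∏ _i : Fin N, (m / Real.exp 1) ^ m := by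
      rw [Finset.prod_const, ← Real.rpow_natCast ((m / Real.exp 1) ^ m) _, ← Real.rpow_mul
        (div_nonneg hm.le (Real.exp_pos 1).le)]
      simp [mul_comm]
    have hlhs : Real.exp (-s) * p ^ m = ∏ i, Real.exp (-lam i) * lam i ^ m := by
      rw [Finset.prod_mul_distrib, ← Real.exp_sum, ← Real.finset_prod_rpow _ _
        (fun i _ => (hlampos i).le), Finset.sum_neg_distrib]
    rw [hrhs, hlhs]
    exact Finset.prod_le_prod
      (fun i _ => mul_nonneg (Real.exp_pos _).le (Real.rpow_nonneg (hlampos i).le _))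
      (fun i _ => scalar_bound (hlampos i) hm)
  calc Real.exp (-s) * (d ^ (-m) * p ^ m)
      = (Real.exp (-s) * p ^ m) * d ^ (-m) := by ring
    _ ≤ (m / Real.exp 1) ^ ((N : ℝ) * m) * d ^ (-m) :=
        mul_le_mul_of_nonneg_right key (Real.rpow_nonneg hd.le _)

lemma posDef_real_smul {N : ℕ} {A : Matrix (Fin N) (Fin N) ℂ} (hA : A.PosDef)
    {r : ℝ} (hr : 0 < r) : (((r : ℂ)) • A).PosDef := by
  refine Matrix.PosDef.of_dotProduct_mulVec_pos ?_ fun x hx => ?_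
  · unfold Matrix.IsHermitian
    rw [conjTranspose_smul, hA.1.eq]
    norm_num
  · rw [Matrix.smul_mulVec, dotProduct_smul, smul_eq_mul]
    exact mul_pos (by exact_mod_cast Complex.real_lt_real.mpr hr) (hA.dotProduct_mulVec_pos hx)

lemma equality_part (N : ℕ) (A : Matrix (Fin N) (Fin N) ℂ) (hA : A.PosDef)
    (m : ℝ) (hm : 0 < m) :
    Real.exp (-(((((m : ℂ)⁻¹ • A : Matrix (Fin N) (Fin N) ℂ))⁻¹ * A).trace.re)) *
        ((m : ℂ)⁻¹ • A : Matrix (Fin N) (Fin N) ℂ).det.re ^ (-m) =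
      (m / Real.exp 1) ^ ((N : ℝ) * m) * A.det.re ^ (-m) := by
  have hm' : (m : ℂ) ≠ 0 := by exact_mod_cast Complex.ofReal_ne_zero.mpr hm.ne'
  have hAdet : IsUnit A.det := isUnit_iff_ne_zero.mpr hA.det_pos.ne'
  have hinv : ((m : ℂ)⁻¹ • A)⁻¹ = (m : ℂ) • A⁻¹ := by
    apply inv_eq_right_inv
    rw [Matrix.smul_mul, Matrix.mul_smul, smul_smul, inv_mul_cancel₀ hm', one_smul,
      mul_nonsing_inv _ hAdet]
  have htr : (((m : ℂ)⁻¹ • A)⁻¹ * A).trace = (m : ℂ) * N := by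
    rw [hinv, Matrix.smul_mul, nonsing_inv_mul _ hAdet, Matrix.trace_smul, Matrix.trace_one]
    simp [smul_eq_mul]
  have htre : (((m : ℂ)⁻¹ • A)⁻¹ * A).trace.re = m * N := by
    rw [htr]; simp
  have hdet : ((m : ℂ)⁻¹ • A).det.re = (m⁻¹) ^ N * A.det.re := by
    rw [Matrix.det_smul]
    have : ((m : ℂ)⁻¹) ^ (Fintype.card (Fin N)) = (((m⁻¹ : ℝ) ^ N : ℝ) : ℂ) := by
      push_cast [Fintype.card_fin]; ring
    rw [this, Complex.re_ofReal_mul]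
  rw [htre, hdet]
  have hd : 0 < A.det.re := (Complex.lt_def.mp hA.det_pos).1
  have h1 : ((m⁻¹) ^ N * A.det.re) ^ (-m) = ((m⁻¹ : ℝ) ^ N) ^ (-m) * A.det.re ^ (-m) :=
    Real.mul_rpow (pow_nonneg (inv_nonneg.mpr hm.le) N) hd.le
  have h2 : ((m⁻¹ : ℝ) ^ N) ^ (-m) = m ^ ((N : ℝ) * m) := by
    rw [← Real.rpow_natCast (m⁻¹) N, ← Real.rpow_mul (inv_nonneg.mpr hm.le),
      Real.inv_rpow hm.le, ← Real.rpow_neg hm.le]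
    congr 1; ring
  rw [h1, h2, Real.div_rpow hm.le (Real.exp_pos 1).le, Real.exp_one_rpow,
    div_eq_mul_inv, ← Real.exp_neg, mul_comm m (N : ℝ)]
  ring

/-- Maximization of the Gaussian likelihood over the unknown
covariance matrix: for `A` Hermitian positive definite and `m > 0`, the function
`C ↦ exp(−Re tr(C⁻¹A)) · (Re det C)^(−m)` over Hermitian positive definite `C`
is bounded by `(m/e)^(N·m) · (Re det A)^(−m)`, with equality at `C = (1/m)·A`;
hence this value is the (attained) supremum. -/
theorem stmt_0 (N : ℕ) (hN : 1 ≤ N) (A : Matrix (Fin N) (Fin N) ℂ) (hA : A.PosDef)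
    (m : ℝ) (hm : 0 < m) :
    (∀ C : Matrix (Fin N) (Fin N) ℂ, C.PosDef →
      Real.exp (-((C⁻¹ * A).trace.re)) * C.det.re ^ (-m) ≤
        (m / Real.exp 1) ^ ((N : ℝ) * m) * A.det.re ^ (-m)) ∧
    (Real.exp (-(((((m : ℂ)⁻¹ • A : Matrix (Fin N) (Fin N) ℂ))⁻¹ * A).trace.re)) *
        ((m : ℂ)⁻¹ • A : Matrix (Fin N) (Fin N) ℂ).det.re ^ (-m) =
      (m / Real.exp 1) ^ ((N : ℝ) * m) * A.det.re ^ (-m)) ∧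
    IsGreatest
      {x : ℝ | ∃ C : Matrix (Fin N) (Fin N) ℂ, C.PosDef ∧
        x = Real.exp (-((C⁻¹ * A).trace.re)) * C.det.re ^ (-m)}
      ((m / Real.exp 1) ^ ((N : ℝ) * m) * A.det.re ^ (-m)) := by
  have heq := equality_part N A hA m hm
  refine ⟨fun C hC => main_bound N A hA m hm C hC, heq, ?_, ?_⟩
  · have hC₀ : ((m : ℂ)⁻¹ • A).PosDef := by
      have := posDef_real_smul hA (inv_pos.mpr hm)
      rwa [Complex.ofReal_inv] at this
    exact ⟨(m : ℂ)⁻¹ • A, hC₀, heq.symm⟩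
  · rintro x ⟨C, hC, rfl⟩
    exact main_bound N A hA m hm C hC
end

section
/- Let S ∈ ℂ^{N×N} be Hermitian positive definite, let u ∈ ℂ^N be nonzero, let w ∈ ℂ^N, and let b ≥ 0. Write w̃ = S^{−1/2} w and ũ = S^{−1/2} u. Then Re(u† (S + (1+b)^{−1} w w†)⁻¹ u) / Re(u† (S + w w†)⁻¹ u) = [ ((1+b) + ‖P⊥_ũ w̃‖²) · (1 + ‖w̃‖²) ] / [ (1 + ‖P⊥_ũ w̃‖²) · (1 + b + ‖w̃‖²) ]. -/
open Matrix
open scoped ComplexOrder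

/-- The positive semidefinite square root of a positive semidefinite matrix
(removed from Mathlib; restored here with its former definition). -/
noncomputable def Matrix.PosSemidef.sqrt {n 𝕜 : Type*} [Fintype n] [DecidableEq n] [RCLike 𝕜]
    {A : Matrix n n 𝕜} (hA : A.PosSemidef) : Matrix n n 𝕜 :=
  hA.1.eigenvectorUnitary.1 * diagonal ((↑) ∘ (Real.sqrt ·) ∘ hA.1.eigenvalues) *
    (star hA.1.eigenvectorUnitary : Matrix n n 𝕜)

/-- Squared Euclidean norm of a complex vector. -/
noncomputable def nsq {N : ℕ} (w : Fin N → ℂ) : ℝ := (star w ⬝ᵥ w).re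

/-- Orthogonal projection matrix `P⊥_q = I − q q†/‖q‖²` onto the orthogonal complement
of the span of `q`. -/
noncomputable def projPerp {N : ℕ} (q : Fin N → ℂ) : Matrix (Fin N) (Fin N) ℂ :=
  1 - (star q ⬝ᵥ q)⁻¹ • vecMulVec q (star q)

lemma psd_sqrt_isHermitian {N : ℕ} {A : Matrix (Fin N) (Fin N) ℂ} (hA : A.PosSemidef) :
    hA.sqrt.IsHermitian := by
  unfold Matrix.PosSemidef.sqrt
  rw [IsHermitian, conjTranspose_mul, conjTranspose_mul, diagonal_conjTranspose]
  simp [Matrix.star_eq_conjTranspose, Matrix.mul_assoc]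
  congr 2
  ext i j
  simp [diagonal_apply]

lemma psd_sqrt_mul_self {N : ℕ} {A : Matrix (Fin N) (Fin N) ℂ} (hA : A.PosSemidef) :
    hA.sqrt * hA.sqrt = A := by
  unfold Matrix.PosSemidef.sqrt
  conv_rhs => rw [hA.1.spectral_theorem, Unitary.conjStarAlgAut_apply]
  have hu : (star hA.1.eigenvectorUnitary : Matrix (Fin N) (Fin N) ℂ) * hA.1.eigenvectorUnitary.1 = 1 :=
    Unitary.coe_star_mul_self _
  calc _ = (hA.1.eigenvectorUnitary.1 * diagonal ((↑) ∘ (Real.sqrt ·) ∘ hA.1.eigenvalues)) *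
      ((star hA.1.eigenvectorUnitary : Matrix (Fin N) (Fin N) ℂ) * hA.1.eigenvectorUnitary.1) *
      (diagonal ((↑) ∘ (Real.sqrt ·) ∘ hA.1.eigenvalues) *
      (star hA.1.eigenvectorUnitary : Matrix (Fin N) (Fin N) ℂ)) := by simp only [Matrix.mul_assoc]; rfl
    _ = _ := by
      rw [hu, Matrix.mul_one, Matrix.mul_assoc, ← Matrix.mul_assoc (diagonal _), diagonal_mul_diagonal]
      have hd : (fun i => ((Complex.ofReal ∘ (Real.sqrt ·) ∘ hA.1.eigenvalues) i) *
          ((Complex.ofReal ∘ (Real.sqrt ·) ∘ hA.1.eigenvalues) i)) = RCLike.ofReal ∘ hA.1.eigenvalues := by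
        funext i
        simp only [Function.comp_apply]
        rw [← Complex.ofReal_mul, Real.mul_self_sqrt (hA.eigenvalues_nonneg i)]
        rfl
      rw [hd, Matrix.mul_assoc]

lemma dot_self_cast {N : ℕ} (x : Fin N → ℂ) :
    star x ⬝ᵥ x = ((∑ i, Complex.normSq (x i) : ℝ) : ℂ) := by
  simp [dotProduct, Complex.normSq_eq_conj_mul_self]

lemma nsq_eq_sum {N : ℕ} (x : Fin N → ℂ) : nsq x = ∑ i, Complex.normSq (x i) := by
  rw [nsq, dot_self_cast, Complex.ofReal_re]

lemma dot_self_eq_nsq {N : ℕ} (x : Fin N → ℂ) : star x ⬝ᵥ x = ((nsq x : ℝ) : ℂ) := by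
  rw [dot_self_cast, nsq_eq_sum]

lemma nsq_nonneg {N : ℕ} (x : Fin N → ℂ) : 0 ≤ nsq x := by
  rw [nsq_eq_sum]
  exact Finset.sum_nonneg fun i _ => Complex.normSq_nonneg _

lemma nsq_pos {N : ℕ} {x : Fin N → ℂ} (hx : x ≠ 0) : 0 < nsq x := by
  rcases Function.ne_iff.1 hx with ⟨i, hi⟩
  rw [nsq_eq_sum]
  exact Finset.sum_pos' (fun j _ => Complex.normSq_nonneg _)
    ⟨i, Finset.mem_univ i, by simpa [Complex.normSq_pos] using hi⟩

lemma vecMulVec_mulVec {N : ℕ} (a c x : Fin N → ℂ) : vecMulVec a c *ᵥ x = (c ⬝ᵥ x) • a := by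
  ext i
  simp [mulVec, vecMulVec_apply, dotProduct, Finset.mul_sum, mul_comm, mul_left_comm, mul_assoc]

lemma mul_vecMulVec {N : ℕ} (M : Matrix (Fin N) (Fin N) ℂ) (a c : Fin N → ℂ) :
    M * vecMulVec a c = vecMulVec (M *ᵥ a) c := by
  ext i j
  simp [Matrix.mul_apply, vecMulVec_apply, mulVec, dotProduct, Finset.sum_mul, mul_assoc]

lemma vecMulVec_mul {N : ℕ} (M : Matrix (Fin N) (Fin N) ℂ) (a c : Fin N → ℂ) :
    vecMulVec a c * M = vecMulVec a (c ᵥ* M) := by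
  ext i j
  simp [Matrix.mul_apply, vecMulVec_apply, vecMul, dotProduct, Finset.mul_sum, mul_assoc]

lemma vecMulVec_mul_vecMulVec {N : ℕ} (a c : Fin N → ℂ) :
    vecMulVec a c * vecMulVec a c = (c ⬝ᵥ a) • vecMulVec a c := by
  ext i j
  simp [Matrix.mul_apply, vecMulVec_apply, dotProduct, Finset.sum_mul, Finset.mul_sum]
  exact Finset.sum_congr rfl fun k _ => by ring

/-- Sherman–Morrison product identity for `1 + c • v vᴴ`. -/
lemma sherman_mul {N : ℕ} (v : Fin N → ℂ) (c : ℂ) (hc : 1 + c * (star v ⬝ᵥ v) ≠ 0) :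
    (1 + c • vecMulVec v (star v)) *
      (1 - (c / (1 + c * (star v ⬝ᵥ v))) • vecMulVec v (star v)) = 1 := by
  set W := star v ⬝ᵥ v with hW
  set d := c / (1 + c * W) with hd
  have key : c - d - c * d * W = 0 := by
    rw [hd]; field_simp; ring
  calc (1 + c • vecMulVec v (star v)) * (1 - d • vecMulVec v (star v))
      = 1 + (c - d - c * d * W) • vecMulVec v (star v) := by
        simp only [mul_sub, add_mul, one_mul, mul_one, Matrix.smul_mul, Matrix.mul_smul,
          smul_smul, vecMulVec_mul_vecMulVec, ← hW]
        rw [sub_smul, sub_smul]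
        abel_nf
        module
    _ = 1 := by rw [key]; simp

/-- The key algebraic step rewriting the partially-compressed likelihood:
`Re(u†(S + (1+b)⁻¹ w w†)⁻¹u) / Re(u†(S + w w†)⁻¹u)` in whitened projection form. -/
theorem stmt_2 (N : ℕ) (S : Matrix (Fin N) (Fin N) ℂ) (hS : S.PosDef)
    (u : Fin N → ℂ) (hu : u ≠ 0) (w : Fin N → ℂ) (b : ℝ) (hb : 0 ≤ b) :
    (star u ⬝ᵥ ((S + ((1 + b : ℝ) : ℂ)⁻¹ • vecMulVec w (star w))⁻¹ *ᵥ u)).re /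
      (star u ⬝ᵥ ((S + vecMulVec w (star w))⁻¹ *ᵥ u)).re =
    (((1 + b) + nsq (projPerp (hS.posSemidef.sqrt⁻¹ *ᵥ u) *ᵥ (hS.posSemidef.sqrt⁻¹ *ᵥ w))) *
        (1 + nsq (hS.posSemidef.sqrt⁻¹ *ᵥ w))) /
    ((1 + nsq (projPerp (hS.posSemidef.sqrt⁻¹ *ᵥ u) *ᵥ (hS.posSemidef.sqrt⁻¹ *ᵥ w))) *
        (1 + b + nsq (hS.posSemidef.sqrt⁻¹ *ᵥ w))) := by
  classical
  set Q := hS.posSemidef.sqrt with hQdef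
  have hQH : Q.IsHermitian := psd_sqrt_isHermitian hS.posSemidef
  have hQQ : Q * Q = S := psd_sqrt_mul_self hS.posSemidef
  have hdetQ : IsUnit Q.det := by
    refine isUnit_iff_ne_zero.2 fun h => (ne_of_gt hS.det_pos) ?_
    rw [← hQQ, det_mul, h, mul_zero]
  have hQT : Q * Q⁻¹ = 1 := mul_nonsing_inv Q hdetQ
  have hTQ : Q⁻¹ * Q = 1 := nonsing_inv_mul Q hdetQ
  have hTH : (Q⁻¹).IsHermitian := hQH.inv
  set T := Q⁻¹ with hTdef
  set ut := T *ᵥ u with hut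
  set wt := T *ᵥ w with hwt
  have hutne : ut ≠ 0 := by
    intro h
    apply hu
    have : Q *ᵥ (T *ᵥ u) = Q *ᵥ 0 := by rw [← hut, h]
    rwa [mulVec_mulVec, hQT, one_mulVec, mulVec_zero] at this
  set W : ℝ := nsq wt with hW
  set U : ℝ := nsq ut with hU
  set z : ℂ := star ut ⬝ᵥ wt with hz
  set β : ℝ := Complex.normSq z with hβ
  have hUpos : 0 < U := nsq_pos hutne
  have hWnn : 0 ≤ W := nsq_nonneg wt
  have hβnn : 0 ≤ β := Complex.normSq_nonneg z
  have hzz : z * starRingEnd ℂ z = ((β : ℝ) : ℂ) := by rw [hβ]; exact Complex.mul_conj z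
  have hzbar : star wt ⬝ᵥ ut = starRingEnd ℂ z := by
    rw [hz]
    simp [dotProduct, map_sum, mul_comm]
  have hstarut : star u ᵥ* T = star ut := by
    rw [hut, star_mulVec, hTH.eq]
  have hdotW : star wt ⬝ᵥ wt = ((W:ℝ) : ℂ) := dot_self_eq_nsq wt
  have hdotU : star ut ⬝ᵥ ut = ((U:ℝ) : ℂ) := dot_self_eq_nsq ut
  -- key quadratic-form formula
  have key : ∀ c : ℝ, 0 < c →
      (star u ⬝ᵥ ((S + (c : ℂ) • vecMulVec w (star w))⁻¹ *ᵥ u)).re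
        = U - (c / (1 + c * W)) * β := by
    intro c hc
    have hden : (0:ℝ) < 1 + c * W := by positivity
    have hdenC : (1 : ℂ) + (c:ℂ) * (star wt ⬝ᵥ wt) ≠ 0 := by
      rw [hdotW]
      norm_cast
      exact ne_of_gt hden
    have h1 : Q *ᵥ wt = w := by rw [hwt, mulVec_mulVec, hQT, one_mulVec]
    have hstar_wt : star wt ᵥ* Q = star w := by
      have hh : star (Q *ᵥ wt) = star wt ᵥ* Qᴴ := star_mulVec Q wt
      rw [h1, hQH.eq] at hh
      exact hh.symm
    set K := (1 : Matrix (Fin N) (Fin N) ℂ) + (c:ℂ) • vecMulVec wt (star wt) with hK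
    set L := (1 : Matrix (Fin N) (Fin N) ℂ)
      - ((c:ℂ) / (1 + (c:ℂ) * (star wt ⬝ᵥ wt))) • vecMulVec wt (star wt) with hL
    have hKL : K * L = 1 := sherman_mul wt c hdenC
    have hM : Q * K * Q = S + (c : ℂ) • vecMulVec w (star w) := by
      rw [hK, Matrix.mul_add, Matrix.add_mul, Matrix.mul_one, hQQ, Matrix.mul_smul,
        Matrix.smul_mul, mul_vecMulVec, vecMulVec_mul, h1, hstar_wt]
    have hMinv : (S + (c : ℂ) • vecMulVec w (star w))⁻¹ = T * L * T := by
      apply inv_eq_right_inv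
      rw [← hM]
      calc Q * K * Q * (T * L * T) = Q * K * (Q * T) * L * T := by
            simp only [Matrix.mul_assoc]
        _ = Q * (K * L) * T := by rw [hQT, Matrix.mul_one, Matrix.mul_assoc Q K L]
        _ = 1 := by rw [hKL, Matrix.mul_one, hQT]
    rw [hMinv]
    have hsplit : (T * L * T) *ᵥ u = T *ᵥ (L *ᵥ ut) := by
      rw [hut, mulVec_mulVec, mulVec_mulVec]
    rw [hsplit, dotProduct_mulVec, hstarut]
    have hLu : L *ᵥ ut = ut - (((c:ℂ) / (1 + (c:ℂ) * (star wt ⬝ᵥ wt))) * (star wt ⬝ᵥ ut)) • wt := by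
      rw [hL, Matrix.sub_mulVec, Matrix.one_mulVec, smul_mulVec, vecMulVec_mulVec,
        smul_smul]
    rw [hLu, dotProduct_sub, dotProduct_smul, dot_self_eq_nsq, ← hU, ← hz, hzbar, hdotW]
    have hthis : ((c:ℂ) / (1 + (c:ℂ) * ((W:ℝ):ℂ)) * starRingEnd ℂ z) • z
        = (((c / (1 + c * W) * β : ℝ)) : ℂ) := by
      rw [smul_eq_mul]
      push_cast
      rw [mul_assoc, mul_comm (starRingEnd ℂ z) z, hzz]
    rw [hthis, ← Complex.ofReal_sub, Complex.ofReal_re]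
  -- projection squared norm
  have hPval : nsq (projPerp ut *ᵥ wt) = W - β / U := by
    have hv : projPerp ut *ᵥ wt = wt - ((((U:ℝ):ℂ))⁻¹ * z) • ut := by
      rw [projPerp, Matrix.sub_mulVec, Matrix.one_mulVec, smul_mulVec, vecMulVec_mulVec,
        smul_smul, hdotU, ← hz]
    set t : ℂ := (((U:ℝ):ℂ))⁻¹ * z with ht
    have hUne : ((U:ℝ):ℂ) ≠ 0 := by
      norm_cast; exact ne_of_gt hUpos
    have e1 : star (wt - t • ut) ⬝ᵥ (wt - t • ut)
        = (star wt ⬝ᵥ wt) - t * (star wt ⬝ᵥ ut) - starRingEnd ℂ t * (star ut ⬝ᵥ wt)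
          + starRingEnd ℂ t * t * (star ut ⬝ᵥ ut) := by
      simp only [star_sub, star_smul, sub_dotProduct, dotProduct_sub, smul_dotProduct,
        dotProduct_smul, smul_eq_mul, Complex.star_def]
      ring
    have hvv : star (wt - t • ut) ⬝ᵥ (wt - t • ut) = ((W - β / U : ℝ) : ℂ) := by
      rw [e1, hdotW, hdotU, hzbar, ← hz, ht]
      have hconj : starRingEnd ℂ ((((U:ℝ):ℂ))⁻¹ * z)
          = (((U:ℝ):ℂ))⁻¹ * starRingEnd ℂ z := by
        rw [_root_.map_mul, map_inv₀, Complex.conj_ofReal]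
      rw [hconj]
      push_cast
      have hUinv : ((U:ℝ):ℂ) * ((((U:ℝ):ℂ))⁻¹)^2 = (((U:ℝ):ℂ))⁻¹ := by
        field_simp
      linear_combination (-(((U:ℝ):ℂ))⁻¹) * hzz + (z * starRingEnd ℂ z) * hUinv
    rw [nsq, hv, hvv, Complex.ofReal_re]
  -- assemble
  have keyNum := key ((1+b)⁻¹) (by positivity)
  have keyDen := key 1 one_pos
  have hcast : ((1 + b : ℝ) : ℂ)⁻¹ = (((1+b)⁻¹ : ℝ) : ℂ) := (Complex.ofReal_inv _).symm
  rw [hcast, keyNum]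
  have hone : vecMulVec w (star w) = ((1:ℝ):ℂ) • vecMulVec w (star w) := by simp
  rw [hone, keyDen, hPval]
  -- pure real arithmetic
  have hA : (0:ℝ) < 1 + b := by linarith
  have hβUW : β ≤ U * W := by
    have h0 := nsq_nonneg (projPerp ut *ᵥ wt)
    rw [hPval] at h0
    have h2 : β / U ≤ W := by linarith
    calc β = (β / U) * U := by field_simp
      _ ≤ W * U := by nlinarith
      _ = U * W := by ring
  have h1W : (0:ℝ) < 1 + W := by linarith
  have hAW : (0:ℝ) < 1 + b + W := by linarith
  have hd2pos : 0 < 1 + (W - β / U) := by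
    have h2 : β / U ≤ W := by
      rw [div_le_iff₀ hUpos]; nlinarith
    linarith
  have hd1pos : 0 < U - 1 / (1 + 1 * W) * β := by
    rw [one_mul, sub_pos]
    rw [div_mul_eq_mul_div, one_mul, div_lt_iff₀ h1W]
    nlinarith
  have hinpos : (0:ℝ) < 1 + (1+b)⁻¹ * W := by
    have h3 : 0 < (1+b)⁻¹ := inv_pos.2 hA
    nlinarith
  rw [div_eq_div_iff (ne_of_gt hd1pos) (ne_of_gt (mul_pos hd2pos hAW))]
  field_simp
  ring
end

section
/- Let α₁, α₂ ∈ ℂ with α₁ ≠ α₂, and let α ∈ ℂ be a point not belonging to the segment {t α₁ + (1−t) α₂ : t ∈ [0,1]}. Then there exists a point ᾱ on that segment such that |ᾱ − α₁| ≤ |α − α₁| and |ᾱ − α₂| ≤ |α − α₂|, with at least one of the two inequalities strict. More precisely: if |α − α₂| > |α₁ − α₂| one may take ᾱ = α₁ (so that |ᾱ − α₂| < |α − α₂|); and if |α − α₂| ≤ |α₁ − α₂| one may take the point ᾱ = α₂ + (|α − α₂|/|α₁ − α₂|)(α₁ − α₂) of the segment, which satisfies |ᾱ − α₂| = |α − α₂|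 and |ᾱ − α₁| < |α − α₁|. -/
/-- Geometric lemma underlying Proposition 2 of the paper: any point `α`
off the segment joining `α₁ ≠ α₂` can be replaced by a point `ᾱ` of the segment that is at
least as close to both endpoints and strictly closer to one of them; explicitly, `ᾱ = α₁`
works when `|α−α₂| > |α₁−α₂|`, and `ᾱ = α₂ + (|α−α₂|/|α₁−α₂|)(α₁−α₂)` works when
`|α−α₂| ≤ |α₁−α₂|`. -/
theorem stmt_6 (α₁ α₂ : ℂ) (hne : α₁ ≠ α₂) (α : ℂ) (hα : α ∉ segment ℝ α₁ α₂) :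
    (∃ ᾱ ∈ segment ℝ α₁ α₂,
        norm (ᾱ - α₁) ≤ norm (α - α₁) ∧
        norm (ᾱ - α₂) ≤ norm (α - α₂) ∧
        (norm (ᾱ - α₁) < norm (α - α₁) ∨
          norm (ᾱ - α₂) < norm (α - α₂))) ∧
    (norm (α₁ - α₂) < norm (α - α₂) →
        norm (α₁ - α₁) ≤ norm (α - α₁) ∧
        norm (α₁ - α₂) < norm (α - α₂)) ∧
    (norm (α - α₂) ≤ norm (α₁ - α₂) →
        (α₂ + ((norm (α - α₂) / norm (α₁ - α₂) : ℝ) : ℂ) * (α₁ - α₂))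
            ∈ segment ℝ α₁ α₂ ∧
        norm
            ((α₂ + ((norm (α - α₂) / norm (α₁ - α₂) : ℝ) : ℂ) * (α₁ - α₂)) - α₂)
          = norm (α - α₂) ∧
        norm
            ((α₂ + ((norm (α - α₂) / norm (α₁ - α₂) : ℝ) : ℂ) * (α₁ - α₂)) - α₁)
          < norm (α - α₁)) := by
  set r : ℝ := norm (α - α₂) with hr
  set d : ℝ := norm (α₁ - α₂) with hd
  have hd0 : 0 < d := by
    rw [hd]
    simpa [sub_eq_zero] using hne
  have hr0 : 0 ≤ r := norm_nonneg _
  -- strict triangle inequality since α is not on the segment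
  have hstrict : d < norm (α - α₁) + r := by
    have htri : dist α₁ α₂ ≤ dist α₁ α + dist α α₂ := dist_triangle _ _ _
    rcases lt_or_eq_of_le htri with h | h
    · have := h
      rw [Complex.dist_eq, Complex.dist_eq, Complex.dist_eq] at this
      calc d = norm (α₁ - α₂) := rfl
        _ < norm (α₁ - α) + norm (α - α₂) := this
        _ = norm (α - α₁) + r := by rw [← norm_neg (α₁ - α)]; ring_nf; rfl
    · exfalso
      apply hα
      rw [mem_segment_iff_wbtw, ← dist_add_dist_eq_iff]
      linarith [h]
  -- the key case: r ≤ d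
  have key : r ≤ d →
      (α₂ + ((r / d : ℝ) : ℂ) * (α₁ - α₂)) ∈ segment ℝ α₁ α₂ ∧
      norm ((α₂ + ((r / d : ℝ) : ℂ) * (α₁ - α₂)) - α₂) = r ∧
      norm ((α₂ + ((r / d : ℝ) : ℂ) * (α₁ - α₂)) - α₁) < norm (α - α₁) := by
    intro hrd
    set t : ℝ := r / d with ht
    have ht0 : 0 ≤ t := div_nonneg hr0 hd0.le
    have ht1 : t ≤ 1 := (div_le_one hd0).mpr hrd
    refine ⟨⟨t, 1 - t, ht0, by linarith, by ring, ?_⟩, ?_, ?_⟩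
    · simp only [Complex.real_smul]
      push_cast
      ring
    · have : (α₂ + ((t : ℝ) : ℂ) * (α₁ - α₂)) - α₂ = ((t : ℝ) : ℂ) * (α₁ - α₂) := by ring
      rw [this, norm_mul, Complex.norm_real, Real.norm_eq_abs, abs_of_nonneg ht0, ht]
      field_simp
      rfl
    · have heq : (α₂ + ((t : ℝ) : ℂ) * (α₁ - α₂)) - α₁ = (((t : ℝ) - 1 : ℝ) : ℂ) * (α₁ - α₂) := by
        push_cast; ring
      rw [heq, norm_mul, Complex.norm_real, Real.norm_eq_abs, abs_of_nonpos (by linarith)]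
      have : -(t - 1) * d = d - r := by
        have : t * d = r := by rw [ht]; field_simp
        nlinarith
      rw [← hd] at *
      rw [this]
      linarith
  refine ⟨?_, fun h => ⟨by simp [norm_nonneg], h⟩, fun hrd => key hrd⟩
  rcases le_or_gt r d with hrd | hdr
  · obtain ⟨hmem, h2, h3⟩ := key hrd
    exact ⟨_, hmem, h3.le, h2.le, Or.inl h3⟩
  · exact ⟨α₁, left_mem_segment _ _ _, by simp [norm_nonneg],
      by simpa using hdr.le, Or.inr (by simpa using hdr)⟩
end

section
/- Let K ≥ N ≥ 1 be integers and a > 0 a real number, and define f : [0, ∞) → ℝ by f(ν) = (1+ν)^{N/(K+1)} (1 + a/(1+ν)). Then f admits a unique minimum over [0, ∞), attained at ν̂ = ((K+1)/N − 1)·a − 1 if ((K+1)/N − 1)·a − 1 > 0 and at ν̂ = 0 otherwise, and the minimum value equals ((K+1−N)/N · a)^{N/(K+1)} · (K+1)/(K+1−N) if (K+1−N)/N · a > 1, and equals 1 + a otherwise. -/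
/-- Proposition 3 of the paper. For `K ≥ N ≥ 1` and `a > 0`, the function
`f(ν) = (1+ν)^(N/(K+1)) (1 + a/(1+ν))` admits a unique minimum over `[0,∞)` at
`νhat = ((K+1)/N − 1)a − 1` if this quantity is positive and at `νhat = 0` otherwise, with
minimum value `((K+1−N)/N·a)^(N/(K+1))·(K+1)/(K+1−N)` if `(K+1−N)/N·a > 1` and `1+a`
otherwise. -/
theorem stmt_9 (N K : ℕ) (hN : 1 ≤ N) (hKN : N ≤ K) (a : ℝ) (ha : 0 < a) :
    let f : ℝ → ℝ := fun ν => (1 + ν) ^ ((N : ℝ) / (K + 1)) * (1 + a / (1 + ν))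
    let νhat : ℝ := if 0 < ((K + 1 : ℝ) / N - 1) * a - 1
      then ((K + 1 : ℝ) / N - 1) * a - 1 else 0
    (0 ≤ νhat) ∧
    (∀ ν : ℝ, 0 ≤ ν → ν ≠ νhat → f νhat < f ν) ∧
    f νhat = (if 1 < ((K : ℝ) + 1 - N) / N * a
      then (((K : ℝ) + 1 - N) / N * a) ^ ((N : ℝ) / (K + 1)) * ((K + 1 : ℝ) / ((K : ℝ) + 1 - N))
      else 1 + a) := by
  intro f νhat
  simp only [f, νhat]
  have hN1 : (1:ℝ) ≤ N := by exact_mod_cast hN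
  have hNK : (N:ℝ) ≤ K := by exact_mod_cast hKN
  have hN0 : (0:ℝ) < N := by linarith
  have hK1 : (0:ℝ) < (K:ℝ) + 1 := by positivity
  have hKN1 : (0:ℝ) < (K:ℝ) + 1 - N := by linarith
  set p : ℝ := (N:ℝ) / ((K:ℝ) + 1) with hp
  have hp0 : 0 < p := by positivity
  have hp1 : p < 1 := by rw [hp, div_lt_one hK1]; linarith
  set c : ℝ := (((K:ℝ) + 1) / N - 1) * a with hc
  have hcalt : c = (1 - p) / p * a := by
    rw [hc, hp]; field_simp
  have hc0 : 0 < c := by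
    rw [hcalt]
    exact mul_pos (div_pos (by linarith) hp0) ha
  have hceq : ((K:ℝ) + 1 - N) / N * a = c := by
    rw [hc]; field_simp
  rw [hceq]
  -- the function g on t = 1 + ν
  set g : ℝ → ℝ := fun t => t ^ p + a * t ^ (p - 1) with hg
  clear_value p c g
  have hfg : ∀ t : ℝ, 0 < t → t ^ p * (1 + a / t) = g t := by
    intro t ht
    rw [hg]
    simp only
    rw [Real.rpow_sub_one ht.ne']
    field_simp
  have hderiv : ∀ t : ℝ, 0 < t →
      HasDerivAt g (t ^ (p - 2) * (p * (t - c))) t := by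
    intro t ht
    have h1 : HasDerivAt (fun x : ℝ => x ^ p) (p * t ^ (p - 1)) t :=
      Real.hasDerivAt_rpow_const (Or.inl ht.ne')
    have h2 : HasDerivAt (fun x : ℝ => x ^ (p - 1)) ((p - 1) * t ^ (p - 1 - 1)) t :=
      Real.hasDerivAt_rpow_const (Or.inl ht.ne')
    have h3 := h1.add (h2.const_mul a)
    convert h3 using 1
    · rfl
    · rfl
    · rw [hg]; rfl
    have e1 : t ^ (p - 1) = t ^ (p - 2) * t := by
      rw [show p - 1 = (p - 2) + 1 by ring, Real.rpow_add ht, Real.rpow_one]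
    have e2 : p - 1 - 1 = p - 2 := by ring
    have e3 : p * c = a * (1 - p) := by
      rw [hcalt]; field_simp
    rw [e1, e2]
    linear_combination (-(t ^ (p - 2))) * e3
  have hcont : ∀ s : Set ℝ, s ⊆ Set.Ioi (0:ℝ) → ContinuousOn g s := by
    intro s hs t ht
    exact ((hderiv t (hs ht)).continuousAt).continuousWithinAt
  have hmono : StrictMonoOn g (Set.Ici (max 1 c)) := by
    apply strictMonoOn_of_deriv_pos (convex_Ici _)
    · exact hcont _ (fun t ht => lt_of_lt_of_le (lt_of_lt_of_le one_pos (le_max_left 1 c)) ht)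
    · intro x hx
      rw [interior_Ici] at hx
      have hx1 : (1:ℝ) < x := lt_of_le_of_lt (le_max_left 1 c) hx
      have hxc : c < x := lt_of_le_of_lt (le_max_right 1 c) hx
      have hx0 : (0:ℝ) < x := by linarith
      rw [(hderiv x hx0).deriv]
      exact mul_pos (Real.rpow_pos_of_pos hx0 _) (mul_pos hp0 (by linarith))
  have hmono' : ∀ ν : ℝ, 0 ≤ ν → max 1 c < 1 + ν → g (max 1 c) < g (1 + ν) := by
    intro ν hν hlt
    exact hmono (Set.self_mem_Ici) (Set.mem_Ici.2 hlt.le) hlt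
  constructor
  · split
    · linarith
    · exact le_refl 0
  constructor
  · intro ν hν hne
    have ht0 : (0:ℝ) < 1 + ν := by linarith
    rw [hfg _ ht0]
    by_cases h1c : (0:ℝ) < c - 1
    · rw [if_pos h1c] at hne ⊢
      have hmax : max 1 c = c := max_eq_right (by linarith)
      have ht0' : (0:ℝ) < 1 + (c - 1) := by linarith
      rw [hfg _ ht0', show 1 + (c - 1) = c by ring]
      rcases lt_or_gt_of_ne (fun h : 1 + ν = c => hne (by linarith)) with hlt | hgt
      · -- 1 + ν < c : use anti
        have hanti : StrictAntiOn g (Set.Icc 1 c) := by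
          apply strictAntiOn_of_deriv_neg (convex_Icc _ _)
          · exact hcont _ (fun t ht => lt_of_lt_of_le one_pos ht.1)
          · intro x hx
            rw [interior_Icc] at hx
            have hx0 : (0:ℝ) < x := lt_trans one_pos hx.1
            rw [(hderiv x hx0).deriv]
            exact mul_neg_of_pos_of_neg (Real.rpow_pos_of_pos hx0 _)
              (mul_neg_of_pos_of_neg hp0 (by linarith [hx.2]))
        exact hanti (Set.mem_Icc.2 ⟨by linarith, hlt.le⟩)
          (Set.mem_Icc.2 ⟨by linarith, le_refl c⟩) hlt
      · rw [← hmax] ; exact hmono' ν hν (by rw [hmax]; exact hgt)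
    · rw [if_neg h1c] at hne ⊢
      have hmax : max 1 c = 1 := max_eq_left (by linarith [not_lt.1 h1c])
      have hν0 : 0 < ν := lt_of_le_of_ne hν (Ne.symm hne)
      have := hmono' ν hν (by rw [hmax]; linarith)
      rw [hmax] at this
      have h1 : g 1 = (1 + (0:ℝ)) ^ p * (1 + a / (1 + 0)) := by
        rw [hfg _ (by norm_num : (0:ℝ) < 1 + 0)]; norm_num
      rw [show (1:ℝ) + 0 = 1 by norm_num] at h1
      rw [h1] at this
      convert this using 2 <;> norm_num
  · by_cases h1c : (0:ℝ) < c - 1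
    · rw [if_pos h1c, if_pos (by linarith : (1:ℝ) < c)]
      have : 1 + (c - 1) = c := by ring
      rw [this]
      congr 1
      have hcne : c ≠ 0 := hc0.ne'
      rw [hcalt, hp]
      have hp' : (N:ℝ) / ((K:ℝ)+1) ≠ 0 := by positivity
      field_simp
      ring
    · rw [if_neg h1c, if_neg (by intro h; exact h1c (by linarith))]
      norm_num
end

section
/- Let ζ > 1 and η > 0 be real numbers, and define y : (0, 1) → ℝ by y(x) = η x ((ζ−1)(1−x)/x)^{1/ζ} · ζ/(ζ−1) − 1. Then: (i) y is strictly increasing on the interval (0, 1 − 1/ζ]; (ii) y(x) → −1 as x → 0⁺; and (iii) y(1 − 1/ζ) = η − 1. -/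
open Real Filter Set

private lemma key_eq (ζ η : ℝ) (hζ : 1 < ζ) (x : ℝ) (hx0 : 0 < x) (hx1 : x < 1) :
    η * x * ((ζ - 1) * (1 - x) / x) ^ (1 / ζ) * (ζ / (ζ - 1)) - 1 =
      (η * (ζ / (ζ - 1)) * (ζ - 1) ^ (1 / ζ)) *
        Real.exp ((1 - 1 / ζ) * Real.log x + (1 / ζ) * Real.log (1 - x)) - 1 := by
  have hζ1 : (0:ℝ) < ζ - 1 := by linarith
  have h1x : (0:ℝ) < 1 - x := by linarith
  have hb : (0:ℝ) < (ζ - 1) * (1 - x) / x := by positivity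
  rw [Real.rpow_def_of_pos hb, Real.rpow_def_of_pos hζ1]
  have hlog : Real.log ((ζ - 1) * (1 - x) / x) =
      Real.log (ζ - 1) + Real.log (1 - x) - Real.log x := by
    rw [Real.log_div (by positivity) hx0.ne', Real.log_mul hζ1.ne' h1x.ne']
  rw [hlog]
  have hmain : x * Real.exp ((Real.log (ζ - 1) + Real.log (1 - x) - Real.log x) * (1 / ζ)) =
      Real.exp (Real.log (ζ - 1) * (1 / ζ)) *
        Real.exp ((1 - 1 / ζ) * Real.log x + 1 / ζ * Real.log (1 - x)) := by
    nth_rewrite 1 [← Real.exp_log hx0]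
    rw [← Real.exp_add, ← Real.exp_add]
    congr 1; ring
  linear_combination (η * (ζ / (ζ - 1))) * hmain

private lemma f_mono (ζ : ℝ) (hζ : 1 < ζ) :
    StrictMonoOn (fun x => (1 - 1 / ζ) * Real.log x + (1 / ζ) * Real.log (1 - x))
      (Set.Ioc 0 (1 - 1 / ζ)) := by
  have hζ0 : (0:ℝ) < ζ := by linarith
  have ha0 : (0:ℝ) < 1 - 1 / ζ := by
    have : 1 / ζ < 1 := by rw [div_lt_one hζ0]; linarith
    linarith
  have ha1 : 1 - 1 / ζ < 1 := by
    have : (0:ℝ) < 1 / ζ := by positivity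
    linarith
  apply strictMonoOn_of_deriv_pos (convex_Ioc _ _)
  · apply ContinuousOn.add
    · exact continuousOn_const.mul (Real.continuousOn_log.mono (by
        intro x hx; exact (ne_of_gt hx.1)))
    · apply continuousOn_const.mul
      apply (Real.continuousOn_log.comp (by fun_prop) ?_)
      intro x hx
      have : x < 1 := lt_of_le_of_lt hx.2 ha1
      simp only [Set.mem_compl_iff, Set.mem_singleton_iff]
      intro h; exact absurd h (by intro h'; nlinarith [hx.1, hx.2])
  · intro x hx
    rw [interior_Ioc] at hx
    obtain ⟨hx0, hxa⟩ := hx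
    have hx1 : x < 1 := lt_trans hxa ha1
    have h1x : (0:ℝ) < 1 - x := by linarith
    have hd1 : HasDerivAt (fun x : ℝ => (1 - 1 / ζ) * Real.log x) ((1 - 1 / ζ) * x⁻¹) x :=
      (Real.hasDerivAt_log hx0.ne').const_mul _
    have hd2 : HasDerivAt (fun x : ℝ => (1 / ζ) * Real.log (1 - x))
        ((1 / ζ) * ((1 - x)⁻¹ * (-1))) x := by
      have h : HasDerivAt (fun x : ℝ => 1 - x) (-1) x := by
        simpa using (hasDerivAt_id x).const_sub 1
      exact ((Real.hasDerivAt_log h1x.ne').comp x h).const_mul _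
    have hd := hd1.add hd2
    rw [show deriv (fun x => (1 - 1 / ζ) * Real.log x + 1 / ζ * Real.log (1 - x)) x = _ from hd.deriv]
    have heq : (1 - 1 / ζ) * x⁻¹ + 1 / ζ * ((1 - x)⁻¹ * (-1)) =
        ((1 - 1 / ζ) - x) / (x * (1 - x)) := by
      field_simp
      ring
    rw [heq]
    apply div_pos (by linarith) (by positivity)

/-- Appendix B of the paper. The function
`y(x) = η x ((ζ−1)(1−x)/x)^(1/ζ) · ζ/(ζ−1) − 1` appearing in the false-alarm computation:
(i) it is strictly increasing on `(0, 1 − 1/ζ]`; (ii) `y(x) → −1` as `x → 0⁺`;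
(iii) `y(1 − 1/ζ) = η − 1`. -/
theorem stmt_12 (ζ η : ℝ) (hζ : 1 < ζ) (hη : 0 < η) :
    let y : ℝ → ℝ := fun x =>
      η * x * ((ζ - 1) * (1 - x) / x) ^ (1 / ζ) * (ζ / (ζ - 1)) - 1
    StrictMonoOn y (Set.Ioc 0 (1 - 1 / ζ)) ∧
    Filter.Tendsto y (nhdsWithin 0 (Set.Ioi 0)) (nhds (-1)) ∧
    y (1 - 1 / ζ) = η - 1 := by
  intro y
  have hζ0 : (0:ℝ) < ζ := by linarith
  have hζ1 : (0:ℝ) < ζ - 1 := by linarith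
  have ha0 : (0:ℝ) < 1 - 1 / ζ := by
    have : 1 / ζ < 1 := by rw [div_lt_one hζ0]; linarith
    linarith
  have ha1 : 1 - 1 / ζ < 1 := by
    have : (0:ℝ) < 1 / ζ := by positivity
    linarith
  have hC : (0:ℝ) < η * (ζ / (ζ - 1)) * (ζ - 1) ^ (1 / ζ) := by positivity
  refine ⟨?_, ?_, ?_⟩
  · intro x₁ hx₁ x₂ hx₂ hlt
    have e1 := key_eq ζ η hζ x₁ hx₁.1 (lt_of_le_of_lt hx₁.2 ha1)
    have e2 := key_eq ζ η hζ x₂ hx₂.1 (lt_of_le_of_lt hx₂.2 ha1)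
    show y x₁ < y x₂
    simp only [y, e1, e2]
    have := f_mono ζ hζ hx₁ hx₂ hlt
    have := Real.exp_lt_exp.2 this
    nlinarith
  · have hF : Tendsto (fun x => (1 - 1 / ζ) * Real.log x + (1 / ζ) * Real.log (1 - x))
        (nhdsWithin 0 (Set.Ioi 0)) atBot := by
      apply Filter.Tendsto.atBot_add (C := 0)
      · apply Tendsto.const_mul_atBot ha0
        exact Real.tendsto_log_nhdsGT_zero
      · have : Tendsto (fun x : ℝ => (1 / ζ) * Real.log (1 - x)) (nhds 0) (nhds 0) := by
          have : ContinuousAt (fun x : ℝ => (1 / ζ) * Real.log (1 - x)) 0 := by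
            apply ContinuousAt.mul continuousAt_const
            apply (Real.continuousAt_log (by norm_num)).comp
            fun_prop
          simpa using this.tendsto
        exact this.mono_left nhdsWithin_le_nhds
    have h2 : Tendsto (fun x => (η * (ζ / (ζ - 1)) * (ζ - 1) ^ (1 / ζ)) *
        Real.exp ((1 - 1 / ζ) * Real.log x + (1 / ζ) * Real.log (1 - x)) - 1)
        (nhdsWithin 0 (Set.Ioi 0)) (nhds (-1)) := by
      have := (Real.tendsto_exp_atBot.comp hF).const_mul
        (η * (ζ / (ζ - 1)) * (ζ - 1) ^ (1 / ζ))
      simp only [mul_zero] at this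
      have := this.sub_const 1
      simpa using this
    apply h2.congr'
    filter_upwards [Ioo_mem_nhdsGT_of_mem (by constructor <;> norm_num :
        (0:ℝ) ∈ Set.Ico 0 1)] with x hx
    exact (key_eq ζ η hζ x hx.1 hx.2).symm
  · show η * (1 - 1/ζ) * ((ζ - 1) * (1 - (1 - 1/ζ)) / (1 - 1/ζ)) ^ (1/ζ) * (ζ / (ζ - 1)) - 1 = η - 1
    have hb : (ζ - 1) * (1 - (1 - 1/ζ)) / (1 - 1/ζ) = 1 := by
      field_simp
      ring
    rw [hb, Real.one_rpow]
    field_simp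
end

section
/- Let ζ > 1 and η > 1 be real numbers, and define y : (0, 1) → ℝ by y(x) = η x ((ζ−1)(1−x)/x)^{1/ζ} · ζ/(ζ−1) − 1. Then there exists a unique x̄ ∈ (0, 1 − 1/ζ) such that y(x̄) = 0. -/
/-- Appendix B of the paper. For `ζ > 1` and threshold `η > 1`, the
function `y(x) = η x ((ζ−1)(1−x)/x)^(1/ζ) · ζ/(ζ−1) − 1` has a unique zero
`x̄ ∈ (0, 1 − 1/ζ)`. -/
theorem stmt_13 (ζ η : ℝ) (hζ : 1 < ζ) (hη : 1 < η) :
    let y : ℝ → ℝ := fun x =>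
      η * x * ((ζ - 1) * (1 - x) / x) ^ (1 / ζ) * (ζ / (ζ - 1)) - 1
    ∃! x : ℝ, x ∈ Set.Ioo (0 : ℝ) (1 - 1 / ζ) ∧ y x = 0 := by
  intro y
  have hζ0 : (0:ℝ) < ζ := by linarith
  have hζ1 : (0:ℝ) < ζ - 1 := by linarith
  set b : ℝ := 1 / ζ with hb_def
  have hb0 : 0 < b := by positivity
  have hb1 : b < 1 := by rw [hb_def, div_lt_one hζ0]; linarith
  set a : ℝ := 1 - b with ha_def
  have ha0 : 0 < a := by simp only [ha_def]; linarith
  have ha1 : a < 1 := by simp only [ha_def]; linarith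
  set C : ℝ := η * (ζ - 1) ^ b * (ζ / (ζ - 1)) with hC_def
  have hC : 0 < C := by
    have := Real.rpow_pos_of_pos hζ1 b
    have : 0 < η * (ζ - 1) ^ b := by positivity
    positivity
  set f : ℝ → ℝ := fun x => C * (x ^ a * (1 - x) ^ b) - 1 with hf_def
  -- f agrees with y on [0, a]
  have heq : Set.EqOn y f (Set.Icc 0 a) := by
    intro x hx
    rcases eq_or_lt_of_le hx.1 with h | h
    · simp only [y, f, ← h, Real.zero_rpow ha0.ne', mul_zero, zero_mul, sub_zero]
    · have hx1 : 0 < 1 - x := by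
        have := hx.2; simp only [ha_def] at this ⊢; linarith
      have hxb : (0:ℝ) < x ^ b := Real.rpow_pos_of_pos h b
      have hxa : x ^ a = x / x ^ b := by
        rw [ha_def, Real.rpow_sub h, Real.rpow_one]
      simp only [y, f, ← hb_def]
      rw [Real.div_rpow (by positivity) h.le, Real.mul_rpow hζ1.le hx1.le, hxa, hC_def]
      field_simp
  have hcont : Continuous f := by
    have h1 : Continuous fun x : ℝ => x ^ a :=
      continuous_iff_continuousAt.2 fun x => Real.continuousAt_rpow_const x a (Or.inr ha0.le)
    have h2 : Continuous fun x : ℝ => (1 - x) ^ b :=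
      (continuous_iff_continuousAt.2 fun x =>
        Real.continuousAt_rpow_const x b (Or.inr hb0.le)).comp
        (continuous_const.sub continuous_id)
    exact ((continuous_const.mul (h1.mul h2))).sub continuous_const
  -- f is strictly monotone on [0, a]
  have hmono : StrictMonoOn f (Set.Icc 0 a) := by
    apply strictMonoOn_of_deriv_pos (convex_Icc 0 a) hcont.continuousOn
    intro x hx
    rw [interior_Icc] at hx
    obtain ⟨hx0, hxa⟩ := hx
    have hx1 : 0 < 1 - x := by linarith
    have h1 : HasDerivAt (fun t : ℝ => t ^ a) (a * x ^ (a - 1)) x :=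
      Real.hasDerivAt_rpow_const (Or.inl hx0.ne')
    have h2 : HasDerivAt (fun t : ℝ => 1 - t) (-1) x := by
      exact (hasDerivAt_id x).const_sub 1
    have h3 : HasDerivAt (fun t : ℝ => (1 - t) ^ b) (b * (1 - x) ^ (b - 1) * (-1)) x :=
      (Real.hasDerivAt_rpow_const (Or.inl hx1.ne')).comp x h2
    have h4 : HasDerivAt f
        (C * (a * x ^ (a - 1) * (1 - x) ^ b + x ^ a * (b * (1 - x) ^ (b - 1) * (-1)))) x :=
      ((h1.mul h3).const_mul C).sub_const 1
    rw [h4.deriv]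
    apply mul_pos hC
    rw [Real.rpow_sub hx0, Real.rpow_sub hx1, Real.rpow_one, Real.rpow_one]
    have hP : (0:ℝ) < x ^ a := Real.rpow_pos_of_pos hx0 a
    have hQ : (0:ℝ) < (1 - x) ^ b := Real.rpow_pos_of_pos hx1 b
    have key : a * (x ^ a / x) * (1 - x) ^ b + x ^ a * (b * ((1 - x) ^ b / (1 - x)) * (-1))
        = x ^ a * (1 - x) ^ b * ((a * (1 - x) - b * x) / (x * (1 - x))) := by
      field_simp
      ring
    rw [key]
    have hnum : 0 < a * (1 - x) - b * x := by
      have : a * (1 - x) - b * x = a - x - b * x + b * x - (1 - a) * x + (1 - a) * x - x * 0 := by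
        simp only [ha_def]; ring
      nlinarith [hxa, hx0, hb0, ha_def]
    exact mul_pos (mul_pos hP hQ) (div_pos hnum (mul_pos hx0 hx1))
  -- endpoint values
  have hf0 : f 0 = -1 := by
    simp [f, Real.zero_rpow ha0.ne']
  have hya : y a = η - 1 := by
    have harg : (ζ - 1) * (1 - a) / a = 1 := by
      rw [ha_def, hb_def]
      field_simp
      ring
    simp only [y, ← hb_def, harg, Real.one_rpow]
    rw [ha_def, hb_def]
    field_simp
  have hfa : f a = η - 1 := by
    rw [← heq (Set.right_mem_Icc.2 ha0.le), hya]
  -- existence via IVT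
  have hmem : (0:ℝ) ∈ Set.Ioo (f 0) (f a) := by
    rw [hf0, hfa]; constructor <;> linarith
  obtain ⟨xbar, hxbarmem, hfxbar⟩ := intermediate_value_Ioo ha0.le hcont.continuousOn hmem
  have hsub : Set.Ioo (0:ℝ) a ⊆ Set.Icc 0 a := Set.Ioo_subset_Icc_self
  refine ⟨xbar, ⟨hxbarmem, by rw [heq (hsub hxbarmem), hfxbar]⟩, ?_⟩
  rintro x' ⟨hx'mem, hyx'⟩
  apply hmono.injOn (hsub hx'mem) (hsub hxbarmem)
  rw [← heq (hsub hx'mem), hyx', hfxbar]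
end

section
/- Let N ≥ 2 and K ≥ N be integers, let ζ > 1 and η > 1 be real numbers, and set m = K + 1 − N. Define y(x) = η x ((ζ−1)(1−x)/x)^{1/ζ} · ζ/(ζ−1) − 1 on (0,1), let x̄ ∈ (0, 1 − 1/ζ) be the unique zero of y, set c = K!/((K+1−N)! (N−2)!), a = ((ζ−1)/ζ)^m / (ζ−1)^{m/ζ}, and define p : [0,1] → ℝ by p(x) = 1 for 0 ≤ x ≤ x̄, p(x) = (1 + y(x))^{−m} for x̄ < x ≤ 1 − 1/ζ, and p(x) = η^{−m} for 1 − 1/ζ < x ≤ 1. Then ∫₀¹ p(x) · c x^{K−N+1} (1−x)^{N−2} dx = c·B_{x̄}(K−N+2, N−1) + (a c/η^m)·[B_{1−1/ζ}(m/ζ + 1, N − 1 − m/ζ) − B_{x̄}(m/ζ + 1, N − 1 − m/ζ)] + (c/η^m)·[B(K−N+2, N−1) − B_{1−1/ζ}(K−N+2, N−1)], where B_u(p, q) = ∫₀ᵘ t^{p−1} (1−t)^{q−1} dt denotes the incomplete beta function and B(p, q) = B₁(p, q) the Eulerian beta function. -/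
open MeasureTheory intervalIntegral Set

private lemma aux_II_congr {f g : ℝ → ℝ} {u v : ℝ}
    (hf : IntervalIntegrable f volume u v) (h : Set.EqOn f g (Set.uIcc u v)) :
    IntervalIntegrable g volume u v :=
  hf.congr (fun x hx => h (Set.uIoc_subset_uIcc hx))

/-- equation (B.4) of the paper. Closed-form probability of false alarm
of the parametric detector: the integral of `p(x)` against the complex central beta density
`c x^(K−N+1)(1−x)^(N−2)` equals the indicated combination of incomplete beta functions. -/
theorem stmt_14 (N K : ℕ) (hN : 2 ≤ N) (hKN : N ≤ K)
    (ζ η : ℝ) (hζ : 1 < ζ) (hη : 1 < η) (xbar : ℝ)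
    (hx : xbar ∈ Set.Ioo (0 : ℝ) (1 - 1 / ζ))
    (hzero : η * xbar * ((ζ - 1) * (1 - xbar) / xbar) ^ (1 / ζ) * (ζ / (ζ - 1)) - 1 = 0) :
    let m : ℝ := (K : ℝ) + 1 - N
    let y : ℝ → ℝ := fun x =>
      η * x * ((ζ - 1) * (1 - x) / x) ^ (1 / ζ) * (ζ / (ζ - 1)) - 1
    let c : ℝ := (Nat.factorial K : ℝ) /
      ((Nat.factorial (K + 1 - N) : ℝ) * (Nat.factorial (N - 2) : ℝ))
    let a : ℝ := ((ζ - 1) / ζ) ^ m / (ζ - 1) ^ (m / ζ)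
    let p : ℝ → ℝ := fun x =>
      if x ≤ xbar then 1 else if x ≤ 1 - 1 / ζ then (1 + y x) ^ (-m) else η ^ (-m)
    let incBeta : ℝ → ℝ → ℝ → ℝ := fun u pp q =>
      ∫ t in (0 : ℝ)..u, t ^ (pp - 1) * (1 - t) ^ (q - 1)
    (∫ x in (0 : ℝ)..1, p x * (c * x ^ (K - N + 1) * (1 - x) ^ (N - 2))) =
      c * incBeta xbar ((K : ℝ) - N + 2) ((N : ℝ) - 1) +
      a * c / η ^ m *
        (incBeta (1 - 1 / ζ) (m / ζ + 1) ((N : ℝ) - 1 - m / ζ) -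
          incBeta xbar (m / ζ + 1) ((N : ℝ) - 1 - m / ζ)) +
      c / η ^ m *
        (incBeta 1 ((K : ℝ) - N + 2) ((N : ℝ) - 1) -
          incBeta (1 - 1 / ζ) ((K : ℝ) - N + 2) ((N : ℝ) - 1)) := by
  intro m y c a p incBeta
  obtain ⟨hx0, hxb2⟩ := hx
  have hζ0 : (0:ℝ) < ζ := by linarith
  have hζ1 : (0:ℝ) < ζ - 1 := by linarith
  have hη0 : (0:ℝ) < η := by linarith
  have hb2pos : (0:ℝ) < 1 - 1/ζ := lt_trans hx0 hxb2
  have hζinv : (0:ℝ) < 1/ζ := by positivity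
  have hb2lt1 : 1 - 1/ζ < 1 := by linarith
  have hNK : (N:ℝ) ≤ (K:ℝ) := Nat.cast_le.mpr hKN
  have hmK : ((K - N + 1 : ℕ) : ℝ) = m := by
    simp only [m]
    rw [Nat.cast_add, Nat.cast_sub hKN, Nat.cast_one]; ring
  have hn2 : ((N - 2 : ℕ) : ℝ) = (N:ℝ) - 2 := by
    rw [Nat.cast_sub hN]; norm_num
  have hm_pos : (0:ℝ) < m := by simp only [m]; linarith
  have hmζ_pos : (0:ℝ) < m / ζ := by positivity
  -- rpow / nat pow conversions
  have hpow1 : ∀ t : ℝ, t ^ ((K:ℝ) - (N:ℝ) + 2 - 1) = t ^ (K - N + 1 : ℕ) := by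
    intro t
    rw [show (K:ℝ) - (N:ℝ) + 2 - 1 = ((K - N + 1 : ℕ) : ℝ) by rw [hmK]; simp only [m]; ring,
      Real.rpow_natCast]
  have hpow2 : ∀ t : ℝ, t ^ ((N:ℝ) - 1 - 1) = t ^ (N - 2 : ℕ) := by
    intro t
    rw [show (N:ℝ) - 1 - 1 = ((N - 2 : ℕ) : ℝ) by rw [hn2]; ring, Real.rpow_natCast]
  have hIB1 : ∀ u : ℝ, incBeta u ((K:ℝ) - N + 2) ((N:ℝ) - 1)
      = ∫ t in (0:ℝ)..u, (t ^ (K - N + 1 : ℕ) * (1 - t) ^ (N - 2 : ℕ)) := by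
    intro u; simp only [incBeta, hpow1, hpow2]
  -- the polynomial density
  have hcont : Continuous (fun t : ℝ => t ^ (K - N + 1 : ℕ) * (1 - t) ^ (N - 2 : ℕ)) := by
    fun_prop
  -- the middle rpow integrand
  have hF2cont : ContinuousOn
      (fun t : ℝ => t ^ (m / ζ + 1 - 1) * (1 - t) ^ ((N:ℝ) - 1 - m / ζ - 1))
      (Set.Icc 0 (1 - 1/ζ)) := by
    intro t ht
    apply ContinuousAt.continuousWithinAt
    have h1 : ContinuousAt (fun t : ℝ => t ^ (m / ζ + 1 - 1)) t :=
      Real.continuousAt_rpow_const _ _ (Or.inr (by linarith))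
    have h2 : ContinuousAt (fun t : ℝ => (1 - t) ^ ((N:ℝ) - 1 - m / ζ - 1)) t := by
      have h1t : (1:ℝ) - t ≠ 0 := by
        have := ht.2; have : t < 1 := lt_of_le_of_lt ht.2 hb2lt1; linarith
      exact ContinuousAt.comp (Real.continuousAt_rpow_const _ _ (Or.inl h1t)) (by fun_prop)
    exact h1.mul h2
  have hF2int_b2 : IntervalIntegrable
      (fun t : ℝ => t ^ (m / ζ + 1 - 1) * (1 - t) ^ ((N:ℝ) - 1 - m / ζ - 1))
      volume 0 (1 - 1/ζ) := by
    apply ContinuousOn.intervalIntegrable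
    rwa [Set.uIcc_of_le hb2pos.le]
  have hF2int_xb : IntervalIntegrable
      (fun t : ℝ => t ^ (m / ζ + 1 - 1) * (1 - t) ^ ((N:ℝ) - 1 - m / ζ - 1))
      volume 0 xbar := by
    apply ContinuousOn.intervalIntegrable
    rw [Set.uIcc_of_le hx0.le]
    exact hF2cont.mono (Set.Icc_subset_Icc_right hxb2.le)
  -- key middle algebraic identity
  have hmid : ∀ x : ℝ, 0 < x → x < 1 →
      (1 + y x) ^ (-m) * (c * x ^ (K - N + 1 : ℕ) * (1 - x) ^ (N - 2 : ℕ))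
        = a * c / η ^ m * (x ^ (m / ζ + 1 - 1) * (1 - x) ^ ((N:ℝ) - 1 - m / ζ - 1)) := by
    intro x hx0' hx1'
    have h1x : (0:ℝ) < 1 - x := by linarith
    have hT : (0:ℝ) < (ζ - 1) * (1 - x) / x := by positivity
    have hE : (0:ℝ) < ((ζ - 1) * (1 - x) / x) ^ (1/ζ) := Real.rpow_pos_of_pos hT _
    have hD : (0:ℝ) < ζ / (ζ - 1) := by positivity
    have h1y : 1 + y x = η * x * ((ζ - 1) * (1 - x) / x) ^ (1/ζ) * (ζ / (ζ - 1)) := by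
      simp only [y]; ring
    have hxm : x ^ (K - N + 1 : ℕ) = x ^ m := by rw [← hmK, Real.rpow_natCast]
    have hxn : (1 - x) ^ (N - 2 : ℕ) = (1 - x) ^ ((N:ℝ) - 2) := by
      rw [← hn2, Real.rpow_natCast]
    rw [hxm, hxn, h1y,
      Real.mul_rpow (by positivity) hD.le, Real.mul_rpow (by positivity) hE.le,
      Real.mul_rpow hη0.le hx0'.le,
      ← Real.rpow_mul hT.le, show 1/ζ * -m = -(m/ζ) by ring,
      Real.rpow_neg hT.le, Real.rpow_neg hη0.le, Real.rpow_neg hx0'.le,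
      Real.rpow_neg hD.le,
      Real.div_rpow (by positivity) hx0'.le, Real.mul_rpow hζ1.le h1x.le,
      show m / ζ + 1 - 1 = m / ζ by ring,
      show (N:ℝ) - 1 - m / ζ - 1 = (N:ℝ) - 2 - m / ζ by ring,
      Real.rpow_sub h1x ((N:ℝ) - 2) (m/ζ)]
    simp only [a]
    rw [show (ζ - 1) / ζ = (ζ / (ζ - 1))⁻¹ by rw [inv_div], Real.inv_rpow hD.le]
    have ne1 : η ^ m ≠ 0 := (Real.rpow_pos_of_pos hη0 _).ne'
    have ne2 : x ^ m ≠ 0 := (Real.rpow_pos_of_pos hx0' _).ne'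
    have ne3 : x ^ (m/ζ) ≠ 0 := (Real.rpow_pos_of_pos hx0' _).ne'
    have ne4 : (1 - x) ^ (m/ζ) ≠ 0 := (Real.rpow_pos_of_pos h1x _).ne'
    have ne5 : (ζ - 1) ^ (m/ζ) ≠ 0 := (Real.rpow_pos_of_pos hζ1 _).ne'
    have ne6 : (ζ / (ζ - 1)) ^ m ≠ 0 := (Real.rpow_pos_of_pos hD _).ne'
    set Eη := η ^ m with hEη
    set Ex := x ^ m with hEx
    set Gx := x ^ (m / ζ) with hGx
    set G1 := (1 - x) ^ (m / ζ) with hG1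
    set Z := (ζ - 1) ^ (m / ζ) with hZ
    set W := (ζ / (ζ - 1)) ^ m with hW
    set P := (1 - x) ^ ((N:ℝ) - 2) with hP
    field_simp
  -- the three pointwise descriptions of the integrand
  have e1 : Set.EqOn (fun x => p x * (c * x ^ (K - N + 1) * (1 - x) ^ (N - 2)))
      (fun x : ℝ => c * (x ^ (K - N + 1 : ℕ) * (1 - x) ^ (N - 2 : ℕ)))
      (Set.uIcc 0 xbar) := by
    intro x hxm
    rw [Set.uIcc_of_le hx0.le] at hxm
    simp only [p, if_pos hxm.2]
    ring
  have e2 : Set.EqOn (fun x => p x * (c * x ^ (K - N + 1) * (1 - x) ^ (N - 2)))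
      (fun x : ℝ => a * c / η ^ m *
        (x ^ (m / ζ + 1 - 1) * (1 - x) ^ ((N:ℝ) - 1 - m / ζ - 1)))
      (Set.uIcc xbar (1 - 1/ζ)) := by
    intro x hxm
    rw [Set.uIcc_of_le hxb2.le] at hxm
    have hx0' : 0 < x := lt_of_lt_of_le hx0 hxm.1
    have hx1' : x < 1 := lt_of_le_of_lt hxm.2 hb2lt1
    by_cases h : x ≤ xbar
    · have hxe : x = xbar := le_antisymm h hxm.1
      subst hxe
      simp only [p, if_pos le_rfl]
      have hy0 : y x = 0 := hzero
      have hmx := hmid x hx0' hx1'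
      rw [hy0] at hmx
      simpa using hmx
    · simp only [p, if_neg h, if_pos hxm.2]
      exact hmid x hx0' hx1'
  have e3 : Set.EqOn (fun x => p x * (c * x ^ (K - N + 1) * (1 - x) ^ (N - 2)))
      (fun x : ℝ => c / η ^ m * (x ^ (K - N + 1 : ℕ) * (1 - x) ^ (N - 2 : ℕ)))
      (Set.uIcc (1 - 1/ζ) 1) := by
    intro x hxm
    rw [Set.uIcc_of_le hb2lt1.le] at hxm
    have hnle : ¬ x ≤ xbar := by
      have : xbar < x := lt_of_lt_of_le hxb2 hxm.1
      linarith
    have hpx : p x = η ^ (-m) := by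
      by_cases h : x ≤ 1 - 1/ζ
      · have hxe : x = 1 - 1/ζ := le_antisymm h hxm.1
        simp only [p, if_neg hnle, if_pos h]
        have harg : (ζ - 1) * (1 - x) / x = 1 := by
          rw [hxe]; field_simp; ring
        have hyx : y x = η - 1 := by
          simp only [y]
          rw [harg, Real.one_rpow, hxe]
          field_simp
        rw [hyx, show 1 + (η - 1) = η by ring]
      · simp only [p, if_neg hnle, if_neg h]
    simp only [hpx, Real.rpow_neg hη0.le]
    ring
  -- interval integrabilities of the full integrand
  have hg1 : IntervalIntegrable (fun x => p x * (c * x ^ (K - N + 1) * (1 - x) ^ (N - 2)))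
      volume 0 xbar :=
    aux_II_congr (((continuous_const.mul hcont)).intervalIntegrable _ _) e1.symm
  have hg2 : IntervalIntegrable (fun x => p x * (c * x ^ (K - N + 1) * (1 - x) ^ (N - 2)))
      volume xbar (1 - 1/ζ) := by
    refine aux_II_congr ?_ e2.symm
    apply IntervalIntegrable.const_mul
    apply ContinuousOn.intervalIntegrable
    rw [Set.uIcc_of_le hxb2.le]
    exact hF2cont.mono (Set.Icc_subset_Icc_left hx0.le)
  have hg3 : IntervalIntegrable (fun x => p x * (c * x ^ (K - N + 1) * (1 - x) ^ (N - 2)))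
      volume (1 - 1/ζ) 1 :=
    aux_II_congr (((continuous_const.mul hcont)).intervalIntegrable _ _) e3.symm
  -- split the integral
  rw [← intervalIntegral.integral_add_adjacent_intervals (hg1.trans hg2) hg3,
    ← intervalIntegral.integral_add_adjacent_intervals hg1 hg2]
  congr 1
  · congr 1
    · -- piece 1
      rw [intervalIntegral.integral_congr e1, intervalIntegral.integral_const_mul, hIB1]
    · -- piece 2
      rw [intervalIntegral.integral_congr e2, intervalIntegral.integral_const_mul]
      congr 1
      rw [← intervalIntegral.integral_interval_sub_left hF2int_b2 hF2int_xb]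
  · -- piece 3
    rw [intervalIntegral.integral_congr e3, intervalIntegral.integral_const_mul]
    congr 1
    rw [hIB1, hIB1,
      intervalIntegral.integral_interval_sub_left (hcont.intervalIntegrable _ _)
        (hcont.intervalIntegrable _ _)]
end
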